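/- arXiv:1909.10816 — 5 statements merged into one kernel-verified Lean document; each statement's English description precedes it below -/
import Mathlib

section
/- Let p be a prime, let G₁ and G₂ be commutative groups (written multiplicatively) in which every element x satisfies x^p = 1, and let e : G₁ → G₁ → G₂ be a bilinear pairing. Let g₁, Y_KGC, y_S, R_S ∈ G₁ and let h_S, h_S', α be integers with α·h_S ≡ h_S' (mod p). If e(y_S, g₁^{h_S} · R_S · Y_KGC) = e(g₁, Y_KGC)^{h_S}, then, setting y_{S'} = y_S^α and R_{S'} = R_S · (g₁^{(α−1)·h_S})⁻¹, one has e(y_{S'}, g₁^{h_S'} · R_{S'} · Y_KGC) = e(g₁, Y_KGC)^{h_S'}. (This is Theorem 1 of the paper: from any valid partial private key (y_S, R_S) for the identity hash h_S in Karati et al.'s CLS scheme, a type 1 adversary can construct a pair (y_{S'}, R_{S'}) passing the KGC's genuineness check for any other identity hash h_S'.) -/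
private lemma zpow_congr_mod {G : Type*} [Group G] {p : ℕ} (x : G) (hx : x ^ p = 1)
    {m n : ℤ} (h : m ≡ n [ZMOD (p : ℤ)]) : x ^ m = x ^ n := by
  obtain ⟨k, hk⟩ := h.dvd
  have : x ^ (n - m) = 1 := by
    rw [hk, zpow_mul, zpow_natCast, hx, one_zpow]
  calc x ^ m = x ^ m * x ^ (n - m) := by rw [this, mul_one]
    _ = x ^ n := by rw [← zpow_add]; ring_nf

/-- Theorem 1 of the paper (partial-private-key forgery in Karati et al.'s CLS scheme):
from a valid partial private key `(y_S, R_S)` for identity hash `h_S`, the pair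
`(y_S ^ α, R_S * (g₁ ^ ((α - 1) * h_S))⁻¹)` passes the genuineness check for any
identity hash `h_S'` with `α * h_S ≡ h_S' (mod p)`. -/
theorem karati_partial_private_key_forgery
    {G₁ G₂ : Type*} [CommGroup G₁] [CommGroup G₂]
    (p : ℕ) (hp : p.Prime)
    (hG₁ : ∀ x : G₁, x ^ p = 1) (hG₂ : ∀ x : G₂, x ^ p = 1)
    (e : G₁ → G₁ → G₂)
    (he_left : ∀ x y z : G₁, e (x * y) z = e x z * e y z)
    (he_right : ∀ x y z : G₁, e x (y * z) = e x y * e x z)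
    (g₁ Y_KGC y_S R_S : G₁) (h_S h_S' α : ℤ)
    (hα : α * h_S ≡ h_S' [ZMOD (p : ℤ)])
    (hvalid : e y_S (g₁ ^ h_S * R_S * Y_KGC) = e g₁ Y_KGC ^ h_S) :
    e (y_S ^ α) (g₁ ^ h_S' * (R_S * (g₁ ^ ((α - 1) * h_S))⁻¹) * Y_KGC)
      = e g₁ Y_KGC ^ h_S' := by
  -- left-argument homomorphism
  have hleft : ∀ (z : G₁) (n : ℤ) (x : G₁), e (x ^ n) z = e x z ^ n := by
    intro z n x
    let f : G₁ →* G₂ :=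
      { toFun := fun w => e w z
        map_one' := by
          show e 1 z = 1
          have h1 := he_left 1 1 z
          rw [one_mul] at h1
          exact left_eq_mul.mp h1
        map_mul' := fun a b => he_left a b z }
    exact map_zpow f x n
  have hright : ∀ (x : G₁) (n : ℤ) (y : G₁), e x (y ^ n) = e x y ^ n := by
    intro x n y
    let f : G₁ →* G₂ :=
      { toFun := fun w => e x w
        map_one' := by
          show e x 1 = 1
          have h1 := he_right x 1 1
          rw [one_mul] at h1
          exact left_eq_mul.mp h1
        map_mul' := fun a b => he_right x a b }
    exact map_zpow f y n
  have harg : g₁ ^ h_S' * (R_S * (g₁ ^ ((α - 1) * h_S))⁻¹) * Y_KGC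
      = g₁ ^ (h_S' - (α - 1) * h_S) * R_S * Y_KGC := by
    have hexp : h_S' - (α - 1) * h_S = h_S' + -((α - 1) * h_S) := by ring
    rw [hexp, zpow_add, zpow_neg, mul_comm R_S, ← mul_assoc]
  have hmod : h_S' - (α - 1) * h_S ≡ h_S [ZMOD (p : ℤ)] := by
    have : h_S' - (α - 1) * h_S = h_S' - α * h_S + h_S := by ring
    rw [this]
    calc h_S' - α * h_S + h_S ≡ h_S' - h_S' + h_S [ZMOD (p:ℤ)] :=
          ((Int.ModEq.refl _).sub hα).add (Int.ModEq.refl _)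
      _ = h_S := by ring
  rw [harg, zpow_congr_mod g₁ (hG₁ g₁) hmod, hleft, hvalid, ← zpow_mul]
  exact zpow_congr_mod _ (hG₂ _) (by rwa [mul_comm] at hα)
end

section
/- Let p be a prime, let G₁ and G₂ be commutative groups (written multiplicatively) in which every element x satisfies x^p = 1, and let e : G₁ → G₁ → G₂ be a bilinear pairing. Let g₁ ∈ G₁ and let y, h, r, s be integers satisfying s·(h + r + y) ≡ y·h (mod p). Set Y_KGC = g₁^y, R = g₁^r and y_i = g₁^s. Then e(g₁, Y_KGC)^h = e(y_i, g₁^h · R · Y_KGC). (This is the correctness of the partial-private-key genuineness check in Karati et al.'s CLS scheme: an honestly generated partial private key y_i = g₁^{y·h/(h+r+y)}, R = g₁^r always passes the user's verification equation.) -/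
/-- Correctness of the partial-private-key genuineness check in Karati et al.'s CLS
scheme: an honestly generated partial private key `y_i = g₁ ^ s` (where
`s ≡ y·h·(h+r+y)⁻¹ (mod p)`, i.e. `s·(h+r+y) ≡ y·h (mod p)`) together with `R = g₁ ^ r`
passes the user's verification equation. -/
theorem karati_partial_private_key_correctness
    {G₁ G₂ : Type*} [CommGroup G₁] [CommGroup G₂]
    (p : ℕ) (hp : p.Prime)
    (hG₁ : ∀ x : G₁, x ^ p = 1) (hG₂ : ∀ x : G₂, x ^ p = 1)
    (e : G₁ → G₁ → G₂)
    (he_left : ∀ x y z : G₁, e (x * y) z = e x z * e y z)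
    (he_right : ∀ x y z : G₁, e x (y * z) = e x y * e x z)
    (g₁ : G₁) (y h r s : ℤ)
    (hs : s * (h + r + y) ≡ y * h [ZMOD (p : ℤ)]) :
    e g₁ (g₁ ^ y) ^ h = e (g₁ ^ s) (g₁ ^ h * g₁ ^ r * g₁ ^ y) := by
  have hre : ∀ (x z : G₁) (n : ℤ), e x (z ^ n) = e x z ^ n := fun x z n =>
    map_zpow (MonoidHom.mk' (e x) (he_right x)) z n
  have hle : ∀ (x z : G₁) (n : ℤ), e (x ^ n) z = e x z ^ n := fun x z n =>
    map_zpow (MonoidHom.mk' (fun w => e w z) (fun a b => he_left a b z)) x n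
  have key : ∀ (E : G₂) (a b : ℤ), a ≡ b [ZMOD (p : ℤ)] → E ^ a = E ^ b := by
    intro E a b hab
    obtain ⟨k, hk⟩ := Int.ModEq.dvd hab
    have hb : b = a + (p : ℤ) * k := by linarith
    have hEp : E ^ (p : ℤ) = 1 := by
      rw [zpow_natCast]; exact hG₂ E
    rw [hb, zpow_add, zpow_mul, hEp, one_zpow, mul_one]
  calc e g₁ (g₁ ^ y) ^ h = e g₁ g₁ ^ (y * h) := by
        rw [hre, ← zpow_mul]
    _ = e g₁ g₁ ^ (s * (h + r + y)) := (key _ _ _ hs).symm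
    _ = e (g₁ ^ s) (g₁ ^ h * g₁ ^ r * g₁ ^ y) := by
        rw [← zpow_add, ← zpow_add, hre, hle, ← zpow_mul, mul_comm s]
end

section
/- Let p be a prime, let G₁ and G₂ be commutative groups (written multiplicatively) in which every element x satisfies x^p = 1, and let e : G₁ → G₁ → G₂ be a bilinear pairing. Let g₁ ∈ G₁ and let y, h_S, r_S, s, c, x, x', m, m', t be integers with s·(h_S + r_S + y) ≡ y·h_S (mod p), x·x' ≡ 1 (mod p), and m·m' ≡ 1 (mod p). Set Y_KGC = g₁^y, R_S = g₁^{r_S}, y_S = g₁^s, g₂ = e(g₁, g₁)^y, σ₁ = g₂^t, σ₂ = (g₁^{h_S} · R_S · Y_KGC)^{(c·m' − t)·x}, Y_{S1} = y_S^{x'}, and Y_{S2} = g₂^c. Then (Y_{S2}^{m'} · σ₁⁻¹)^{h_S} = e(Y_{S1}, σ₂). (This is the correctness of signature verification in Karati et al.'s CLS scheme: an honestly generated signature (σ₁, σ₂) on a message with invertible hash value m, under public key (Y_{S1}, Y_{S2}), passes the verification equation (Y_{S2}^{1/m}/σ₁)^{h_S} = e(Y_{S1}, σ₂).) -/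
private lemma zpow_eq_of_modeq {G : Type*} [CommGroup G] {p : ℕ} (g : G)
    (hg : g ^ p = 1) {a b : ℤ} (h : a ≡ b [ZMOD (p : ℤ)]) : g ^ a = g ^ b := by
  obtain ⟨k, hk⟩ := h.dvd
  have hb : b = a + (p : ℤ) * k := by linarith
  rw [hb, zpow_add, zpow_mul, zpow_natCast, hg, one_zpow, mul_one]

/-- Correctness of signature verification in Karati et al.'s CLS scheme: an honestly
generated signature `(σ₁, σ₂)` on a message with (invertible) hash value `m`, under
public key `(Y_S1, Y_S2) = (y_S ^ x', g₂ ^ c)`, passes the verification equation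
`(Y_S2 ^ (1/m) / σ₁) ^ h_S = e (Y_S1) σ₂`. Here the signer's partial private key is
`y_S = g₁ ^ s` with `s·(h_S+r_S+y) ≡ y·h_S (mod p)` and `R_S = g₁ ^ r_S`, `x'` is an
inverse of `x` mod `p`, and `m'` an inverse of `m` mod `p`. -/
theorem karati_verification_correctness
    {G₁ G₂ : Type*} [CommGroup G₁] [CommGroup G₂]
    (p : ℕ) (hp : p.Prime)
    (hG₁ : ∀ x : G₁, x ^ p = 1) (hG₂ : ∀ x : G₂, x ^ p = 1)
    (e : G₁ → G₁ → G₂)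
    (he_left : ∀ x y z : G₁, e (x * y) z = e x z * e y z)
    (he_right : ∀ x y z : G₁, e x (y * z) = e x y * e x z)
    (g₁ : G₁) (y h_S r_S s c x x' m m' t : ℤ)
    (hs : s * (h_S + r_S + y) ≡ y * h_S [ZMOD (p : ℤ)])
    (hx : x * x' ≡ 1 [ZMOD (p : ℤ)])
    (hm : m * m' ≡ 1 [ZMOD (p : ℤ)])
    (Y_KGC : G₁) (hYKGC : Y_KGC = g₁ ^ y)
    (R_S : G₁) (hRS : R_S = g₁ ^ r_S)
    (y_S : G₁) (hyS : y_S = g₁ ^ s)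
    (g₂ : G₂) (hg₂ : g₂ = e g₁ g₁ ^ y)
    (σ₁ : G₂) (hσ₁ : σ₁ = g₂ ^ t)
    (σ₂ : G₁) (hσ₂ : σ₂ = (g₁ ^ h_S * R_S * Y_KGC) ^ ((c * m' - t) * x))
    (Y_S1 : G₁) (hYS1 : Y_S1 = y_S ^ x')
    (Y_S2 : G₂) (hYS2 : Y_S2 = g₂ ^ c) :
    (Y_S2 ^ m' * σ₁⁻¹) ^ h_S = e Y_S1 σ₂ := by
  have hL : ∀ (z : G₁) (n : ℤ) (a : G₁), e (a ^ n) z = (e a z) ^ n := by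
    intro z n a
    exact map_zpow (MonoidHom.mk' (fun w => e w z) (fun u v => he_left u v z)) a n
  have hR : ∀ (a : G₁) (n : ℤ) (z : G₁), e a (z ^ n) = (e a z) ^ n := by
    intro a n z
    exact map_zpow (MonoidHom.mk' (fun w => e a w) (fun u v => he_right a u v)) z n
  subst hYKGC hRS hyS hg₂ hσ₁ hσ₂ hYS1 hYS2
  have base := hG₂ (e g₁ g₁)
  rw [← zpow_mul, ← zpow_mul, ← zpow_mul, ← zpow_neg, ← zpow_add, ← zpow_mul,
    ← zpow_add, ← zpow_add, hL, hR, hL, ← zpow_mul, ← zpow_mul]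
  rw [hR, ← zpow_mul]
  apply zpow_eq_of_modeq _ base
  have hs' : ((s : ZMod p)) * ((h_S : ZMod p) + r_S + y) = (y : ZMod p) * h_S := by
    have := (ZMod.intCast_eq_intCast_iff _ _ _).mpr hs
    push_cast at this ⊢; exact this
  have hx' : ((x : ZMod p)) * (x' : ZMod p) = 1 := by
    have := (ZMod.intCast_eq_intCast_iff _ _ _).mpr hx
    push_cast at this ⊢; exact this
  rw [← ZMod.intCast_eq_intCast_iff]
  push_cast
  linear_combination (-((c : ZMod p) * m' - t)) * hs' - (s : ZMod p) * ((h_S : ZMod p) + r_S + y) * ((c : ZMod p) * m' - t) * hx'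
end

section
/- Let G₁ be an additive commutative group, G₂ a multiplicative commutative group, and e : G₁ → G₁ → G₂ a symmetric bilinear pairing. Let P, Q, W, R, V ∈ G₁ and let α, x_S, h, h' be integers, and set P_pub = α·P and Y_S = x_S·P. If e(V, P) = e(Q + h·Y_S, P_pub) · e(R, W), then V' = V + (h' − h)·(x_S·P_pub) satisfies e(V', P) = e(Q + h'·Y_S, P_pub) · e(R, W). (This is Theorem 2 of the paper: in Kumar et al.'s CLS scheme, a type 1 adversary knowing the signer's secret value x_S and one valid signature (R, V) on a message with hash value h under state information with hash W can forge a valid signature (R, V') on any new message with hash value h' under the same state information.) -/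
/-! Bilinearity gives `e (x_S • P_pub) P = e P P ^ (α * x_S) = e Y_S P_pub`. Hence adding
`(h' - h) • (x_S • P_pub)` to `V` multiplies the left side by `e Y_S P_pub ^ (h' - h)`, which is
exactly the factor by which the right side changes when `h` is replaced by `h'`. -/

section Pairing

variable {A M : Type*} [AddGroup A] [Group M]

theorem map_zsmul_of_map_add {f : A → M} (hf : ∀ a b, f (a + b) = f a * f b) (n : ℤ) (a : A) :
    f (n • a) = f a ^ n :=
  map_zpow (MonoidHom.mk' (f ∘ Multiplicative.toAdd) hf) (Multiplicative.ofAdd a) n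

variable {e : A → A → M}

theorem pairing_zsmul_left (he_left : ∀ a b c, e (a + b) c = e a c * e b c)
    (n : ℤ) (a b : A) : e (n • a) b = e a b ^ n :=
  map_zsmul_of_map_add (f := (e · b)) (he_left · · b) n a

theorem pairing_zsmul_right (he_right : ∀ a b c, e a (b + c) = e a b * e a c)
    (n : ℤ) (a b : A) : e a (n • b) = e a b ^ n :=
  map_zsmul_of_map_add (f := e a) (he_right a) n b

theorem pairing_zsmul_zsmul_self (he_left : ∀ a b c, e (a + b) c = e a c * e b c)
    (he_right : ∀ a b c, e a (b + c) = e a b * e a c) (m n : ℤ) (P : A) :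
    e (m • n • P) P = e (m • P) (n • P) := by
  rw [pairing_zsmul_left he_left, pairing_zsmul_left he_left, pairing_zsmul_right he_right,
    pairing_zsmul_left he_left, ← zpow_mul, ← zpow_mul, mul_comm]

end Pairing

theorem kumar_type1_forgery_general
    {G₁ G₂ : Type*} [AddCommGroup G₁] [CommGroup G₂]
    (e : G₁ → G₁ → G₂)
    (he_left : ∀ a b c : G₁, e (a + b) c = e a c * e b c)
    (he_right : ∀ a b c : G₁, e a (b + c) = e a b * e a c)
    (P Q W R V : G₁) (α x_S h h' : ℤ)
    (P_pub : G₁) (hPpub : P_pub = α • P)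
    (Y_S : G₁) (hYS : Y_S = x_S • P)
    (hvalid : e V P = e (Q + h • Y_S) P_pub * e R W)
    (V' : G₁) (hV' : V' = V + (h' - h) • (x_S • P_pub)) :
    e V' P = e (Q + h' • Y_S) P_pub * e R W := by
  have hshift : e (x_S • P_pub) P = e Y_S P_pub := by
    rw [hPpub, hYS, pairing_zsmul_zsmul_self he_left he_right]
  calc e V' P = e V P * e Y_S P_pub ^ (h' - h) := by
        rw [hV', he_left, pairing_zsmul_left he_left, hshift]
    _ = e Q P_pub * e Y_S P_pub ^ (h + (h' - h)) * e R W := by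
        rw [hvalid, he_left, pairing_zsmul_left he_left, zpow_add]; ac_rfl
    _ = e (Q + h' • Y_S) P_pub * e R W := by
        rw [add_sub_cancel, he_left, pairing_zsmul_left he_left]

/-- Theorem 2 of the paper: in Kumar et al.'s CLS scheme, a type 1 adversary knowing
the signer's secret value `x_S` and one valid signature `(R, V)` on a message with hash
value `h` under state information with hash `W` can forge a valid signature `(R, V')`
with `V' = V + (h' - h) • (x_S • P_pub)` on any new message with hash value `h'` under
the same state information. -/
theorem kumar_type1_forgery
    {G₁ G₂ : Type*} [AddCommGroup G₁] [CommGroup G₂]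
    (e : G₁ → G₁ → G₂)
    (he_left : ∀ a b c : G₁, e (a + b) c = e a c * e b c)
    (he_right : ∀ a b c : G₁, e a (b + c) = e a b * e a c)
    (he_symm : ∀ a b : G₁, e a b = e b a)
    (P Q W R V : G₁) (α x_S h h' : ℤ)
    (P_pub : G₁) (hPpub : P_pub = α • P)
    (Y_S : G₁) (hYS : Y_S = x_S • P)
    (hvalid : e V P = e (Q + h • Y_S) P_pub * e R W)
    (V' : G₁) (hV' : V' = V + (h' - h) • (x_S • P_pub)) :
    e V' P = e (Q + h' • Y_S) P_pub * e R W :=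
  kumar_type1_forgery_general e he_left he_right P Q W R V α x_S h h' P_pub hPpub Y_S hYS hvalid V'
    hV'
end

section
/- Let G₁ be an additive commutative group, G₂ a multiplicative commutative group, and e : G₁ → G₁ → G₂ a symmetric bilinear pairing. Let P, Q, W ∈ G₁ and let α, x_S, r, h be integers. Set P_pub = α·P, Y_S = x_S·P, D_S = α·Q, R = r·P, and V = D_S + r·W + h·(x_S·P_pub). Then e(V, P) = e(Q + h·Y_S, P_pub) · e(R, W). (This is the correctness of Kumar et al.'s CLS scheme: an honestly generated signature (R, V) on a message with hash value h under state information with hash W passes the verification equation.) -/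
theorem zpow_apply_of_map_add {A M : Type*} [AddGroup A] [Group M] (f : A → M)
    (hf : ∀ a b, f (a + b) = f a * f b) (n : ℤ) (a : A) : f (n • a) = f a ^ n :=
  map_zsmul (AddMonoidHom.mk' (fun x => Additive.ofMul (f x)) hf) n a

theorem kumar_verification_correctness_general
    {G₁ G₂ : Type*} [AddCommGroup G₁] [CommGroup G₂]
    (e : G₁ → G₁ → G₂)
    (he_left : ∀ a b c : G₁, e (a + b) c = e a c * e b c)
    (he_symm : ∀ a b : G₁, e a b = e b a)
    (P Q W : G₁) (α x_S r h : ℤ)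
    (P_pub : G₁) (hPpub : P_pub = α • P)
    (Y_S : G₁) (hYS : Y_S = x_S • P)
    (D_S : G₁) (hDS : D_S = α • Q)
    (R : G₁) (hR : R = r • P)
    (V : G₁) (hV : V = D_S + r • W + h • (x_S • P_pub)) :
    e V P = e (Q + h • Y_S) P_pub * e R W := by
  have zsmul_left (n : ℤ) (a c : G₁) : e (n • a) c = e a c ^ n :=
    zpow_apply_of_map_add (e · c) (fun a b => he_left a b c) n a
  have zsmul_right (n : ℤ) (a c : G₁) : e a (n • c) = e a c ^ n := by
    rw [he_symm, zsmul_left, he_symm]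
  subst hPpub hYS hDS hR hV
  simp only [he_left, zsmul_left, zsmul_right, he_symm W P, ← zpow_mul]
  ac_rfl

/-- Correctness of Kumar et al.'s CLS scheme: an honestly generated signature
`(R, V) = (r • P, D_S + r • W + h • (x_S • P_pub))` on a message with hash value `h`
under state information with hash `W` passes the verification equation. -/
theorem kumar_verification_correctness
    {G₁ G₂ : Type*} [AddCommGroup G₁] [CommGroup G₂]
    (e : G₁ → G₁ → G₂)
    (he_left : ∀ a b c : G₁, e (a + b) c = e a c * e b c)
    (he_right : ∀ a b c : G₁, e a (b + c) = e a b * e a c)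
    (he_symm : ∀ a b : G₁, e a b = e b a)
    (P Q W : G₁) (α x_S r h : ℤ)
    (P_pub : G₁) (hPpub : P_pub = α • P)
    (Y_S : G₁) (hYS : Y_S = x_S • P)
    (D_S : G₁) (hDS : D_S = α • Q)
    (R : G₁) (hR : R = r • P)
    (V : G₁) (hV : V = D_S + r • W + h • (x_S • P_pub)) :
    e V P = e (Q + h • Y_S) P_pub * e R W :=
  kumar_verification_correctness_general e he_left he_symm P Q W α x_S r h P_pub hPpub Y_S hYS D_S
    hDS R hR V hV
end
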